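/- arXiv:1805.10242 — 2 statements merged into one kernel-verified Lean document; each statement's English description precedes it below -/
import Mathlib

section
/- Let λ₁, λ₂, λ₃ ∈ ℂ be such that L² = 4λ₁λ₂λ₃ for some L ≠ 0, and define μ₁ = (λ₁ + λ₂λ₃)/L, μ₂ = (λ₂ + λ₁λ₃)/L, μ₃ = (λ₃ + λ₁λ₂)/L, assumed pairwise distinct with μ₂ ≠ μ₃, μ₁ ≠ ±1. Define μ̌₁ = (2μ₁−μ₂−μ₃)/(μ₂−μ₃), μ̌₂ = μ̌₁ − 2(μ₁−μ₂)(μ₁−μ₃)/((μ₁+1)(μ₂−μ₃)), μ̌₃ = μ̌₁ − 2(μ₁−μ₂)(μ₁−μ₃)/((μ₁−1)(μ₂−μ₃)). Then applying the same transformation to (μ̌₁, μ̌₂, μ̌₃) returns (μ₁, μ₂, μ₃); i.e., the relation between (μ₁,μ₂,μ₃) and (μ̌₁,μ̌₂,μ̌₃) is symmetric (involutive). -/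
/-- The duality map (μ₁,μ₂,μ₃) ↦ (μ̌₁,μ̌₂,μ̌₃) on moduli of genus-two curves
is an involution: applying the same transformation to the dual moduli
returns the original moduli. -/
theorem nikulin_stmt_14 (lam1 lam2 lam3 L mu1 mu2 mu3 mc1 mc2 mc3 : ℂ)
    (hL : L ≠ 0) (hL2 : L ^ 2 = 4 * lam1 * lam2 * lam3)
    (hm1 : mu1 = (lam1 + lam2 * lam3) / L)
    (hm2 : mu2 = (lam2 + lam1 * lam3) / L)
    (hm3 : mu3 = (lam3 + lam1 * lam2) / L)
    (hd12 : mu1 ≠ mu2) (hd13 : mu1 ≠ mu3) (hd23 : mu2 ≠ mu3)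
    (h1 : mu1 ≠ 1) (h1' : mu1 ≠ -1)
    (hc1 : mc1 = (2 * mu1 - mu2 - mu3) / (mu2 - mu3))
    (hc2 : mc2 = mc1 - 2 * (mu1 - mu2) * (mu1 - mu3) / ((mu1 + 1) * (mu2 - mu3)))
    (hc3 : mc3 = mc1 - 2 * (mu1 - mu2) * (mu1 - mu3) / ((mu1 - 1) * (mu2 - mu3)))
    (hdc : mc2 ≠ mc3) (hcc1 : mc1 ≠ 1) (hcc1' : mc1 ≠ -1) :
    (2 * mc1 - mc2 - mc3) / (mc2 - mc3) = mu1 ∧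
    (2 * mc1 - mc2 - mc3) / (mc2 - mc3) -
        2 * (mc1 - mc2) * (mc1 - mc3) / ((mc1 + 1) * (mc2 - mc3)) = mu2 ∧
    (2 * mc1 - mc2 - mc3) / (mc2 - mc3) -
        2 * (mc1 - mc2) * (mc1 - mc3) / ((mc1 - 1) * (mc2 - mc3)) = mu3 := by
  have h12 : mu1 - mu2 ≠ 0 := sub_ne_zero.mpr hd12
  have h13 : mu1 - mu3 ≠ 0 := sub_ne_zero.mpr hd13
  have h23 : mu2 - mu3 ≠ 0 := sub_ne_zero.mpr hd23
  have hp : mu1 + 1 ≠ 0 := by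
    intro h; exact h1' (by linear_combination h)
  have hm : mu1 - 1 ≠ 0 := sub_ne_zero.mpr h1
  have hcd : mc2 - mc3 ≠ 0 := sub_ne_zero.mpr hdc
  have hcp : mc1 + 1 ≠ 0 := by
    intro h; exact hcc1' (by linear_combination h)
  have hcm : mc1 - 1 ≠ 0 := sub_ne_zero.mpr hcc1
  have eA : mc2 - mc3 =
      4 * (mu1 - mu2) * (mu1 - mu3) / ((mu1 + 1) * (mu1 - 1) * (mu2 - mu3)) := by
    rw [hc2, hc3]; field_simp; ring
  have eB : 2 * mc1 - mc2 - mc3 =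
      4 * mu1 * (mu1 - mu2) * (mu1 - mu3) / ((mu1 + 1) * (mu1 - 1) * (mu2 - mu3)) := by
    rw [hc2, hc3]; field_simp; ring
  have e12 : mc1 - mc2 = 2 * (mu1 - mu2) * (mu1 - mu3) / ((mu1 + 1) * (mu2 - mu3)) := by
    rw [hc2]; ring
  have e13 : mc1 - mc3 = 2 * (mu1 - mu2) * (mu1 - mu3) / ((mu1 - 1) * (mu2 - mu3)) := by
    rw [hc3]; ring
  have ep : mc1 + 1 = 2 * (mu1 - mu3) / (mu2 - mu3) := by
    rw [hc1]; field_simp; ring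
  have em : mc1 - 1 = 2 * (mu1 - mu2) / (mu2 - mu3) := by
    rw [hc1]; field_simp; ring
  have g1 : (2 * mc1 - mc2 - mc3) / (mc2 - mc3) = mu1 := by
    rw [div_eq_iff hcd]
    linear_combination eB - mu1 * eA
  have g2 : 2 * (mc1 - mc2) * (mc1 - mc3) / ((mc1 + 1) * (mc2 - mc3)) = mu1 - mu2 := by
    rw [div_eq_iff (mul_ne_zero hcp hcd), e12, e13, ep, eA]
    field_simp
    ring
  have g3 : 2 * (mc1 - mc2) * (mc1 - mc3) / ((mc1 - 1) * (mc2 - mc3)) = mu1 - mu3 := by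
    rw [div_eq_iff (mul_ne_zero hcm hcd), e12, e13, em, eA]
    field_simp
    ring
  refine ⟨g1, ?_, ?_⟩
  · rw [g1, g2]; ring
  · rw [g1, g3]; ring
end

section
/- Six lines in ℙ² given by ℓ₁ = z₁, ℓ₂ = z₂, ℓ₃ = z₃, ℓ₄ = z₁+z₂+z₃, ℓ₅ = az₁+bz₂+z₃, ℓ₆ = cz₁+dz₂+z₃ (with a,b,c,d ∈ ℂ generic) are all tangent to the smooth conic (αz₁ + (1−α)z₂ + z₃)² − 4α(1−α)z₁z₂ = 0 with α = a(1−b)/(a−b) if and only if abc − abd − acd + bcd + ad − bc = 0. -/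
/-- The quadratic form of the conic (αz₁ + (1−α)z₂ + z₃)² − 4α(1−α)z₁z₂. -/
def conicForm (α : ℂ) (z : ℂ × ℂ × ℂ) : ℂ :=
  (α * z.1 + (1 - α) * z.2.1 + z.2.2) ^ 2 - 4 * α * (1 - α) * z.1 * z.2.1

/-- A line (given by its coefficients l) is tangent to the conic if the
intersection of the line with the conic consists of a single point of ℙ². -/
def TangentLine (α : ℂ) (l : ℂ × ℂ × ℂ) : Prop :=
  ∃ w : ℂ × ℂ × ℂ, w ≠ (0, 0, 0) ∧
    l.1 * w.1 + l.2.1 * w.2.1 + l.2.2 * w.2.2 = 0 ∧ conicForm α w = 0 ∧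
    ∀ v : ℂ × ℂ × ℂ,
      l.1 * v.1 + l.2.1 * v.2.1 + l.2.2 * v.2.2 = 0 → conicForm α v = 0 →
      ∃ t : ℂ, v = (t * w.1, t * w.2.1, t * w.2.2)

lemma sqz {x : ℂ} (h : x ^ 2 = 0) : x = 0 := pow_eq_zero_iff two_ne_zero |>.mp h

lemma tangent_l1 (α : ℂ) : TangentLine α (1, 0, 0) := by
  refine ⟨(0, 1, -(1-α)), ?_, by simp only; ring, by simp only [conicForm]; ring, ?_⟩
  · intro h; rw [Prod.mk.injEq, Prod.mk.injEq] at h; exact one_ne_zero h.2.1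
  · rintro ⟨v1, v2, v3⟩ hl hc
    simp only at hl
    simp only [conicForm] at hc
    have hv1 : v1 = 0 := by linear_combination hl
    subst hv1
    have h2 : (1-α) * v2 + v3 = 0 := sqz (by linear_combination hc)
    exact ⟨v2, by rw [Prod.mk.injEq, Prod.mk.injEq]
                  exact ⟨by ring, by ring, by linear_combination h2⟩⟩

lemma tangent_l2 (α : ℂ) : TangentLine α (0, 1, 0) := by
  refine ⟨(1, 0, -α), ?_, by simp only; ring, by simp only [conicForm]; ring, ?_⟩
  · intro h; rw [Prod.mk.injEq, Prod.mk.injEq] at h; exact one_ne_zero h.1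
  · rintro ⟨v1, v2, v3⟩ hl hc
    simp only at hl
    simp only [conicForm] at hc
    have hv2 : v2 = 0 := by linear_combination hl
    subst hv2
    have h2 : α * v1 + v3 = 0 := sqz (by linear_combination hc)
    exact ⟨v1, by rw [Prod.mk.injEq, Prod.mk.injEq]
                  exact ⟨by ring, by ring, by linear_combination h2⟩⟩

lemma tangent_l3 (α : ℂ) (hα1 : α ≠ 1) : TangentLine α (0, 0, 1) := by
  have hβ : (1 : ℂ) - α ≠ 0 := sub_ne_zero.mpr fun h => hα1 h.symm
  refine ⟨(1-α, α, 0), ?_, by simp only; ring, by simp only [conicForm]; ring, ?_⟩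
  · intro h; rw [Prod.mk.injEq, Prod.mk.injEq] at h; exact hβ h.1
  · rintro ⟨v1, v2, v3⟩ hl hc
    simp only at hl
    simp only [conicForm] at hc
    have hv3 : v3 = 0 := by linear_combination hl
    subst hv3
    have h2 : α * v1 - (1-α) * v2 = 0 := sqz (by linear_combination hc)
    refine ⟨v1 / (1-α), ?_⟩
    rw [Prod.mk.injEq, Prod.mk.injEq]
    refine ⟨(div_mul_cancel₀ v1 hβ).symm, ?_, by ring⟩
    rw [div_mul_eq_mul_div, eq_div_iff hβ]
    linear_combination -h2

lemma conic_restrict (α p q x y : ℂ) :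
    conicForm α (x, y, -(p*x+q*y)) =
      (α-p)^2*x^2 + (2*(α-p)*(1-α-q) - 4*α*(1-α))*x*y + (1-α-q)^2*y^2 := by
  simp only [conicForm]; ring

set_option maxHeartbeats 1000000 in
lemma tangent_gen (α p q : ℂ) (hα0 : α ≠ 0) (hα1 : α ≠ 1) :
    TangentLine α (p, q, 1) ↔ p*q - (1-α)*p - α*q = 0 := by
  have hβ : (1 : ℂ) - α ≠ 0 := sub_ne_zero.mpr fun h => hα1 h.symm
  have hαβ : α * (1 - α) ≠ 0 := mul_ne_zero hα0 hβ
  constructor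
  · rintro ⟨⟨w1, w2, w3⟩, hw0, hwl, hwc, huniq⟩
    by_contra hE
    simp only at hwl hwc huniq
    by_cases hA : α - p = 0
    · obtain ⟨t1, ht1⟩ := huniq (1, 0, -(p*1 + q*0))
        (by simp only; ring)
        (by rw [conic_restrict]; linear_combination ((α-p)*1 + 0) * hA)
      obtain ⟨t2, ht2⟩ := huniq (-(1-α-q)^2, -4*α*(1-α),
          -(p*(-(1-α-q)^2) + q*(-4*α*(1-α))))
        (by simp only; ring)
        (by rw [conic_restrict]
            linear_combination ((α-p)*(1-α-q)^4 + 8*α*(1-α)*(1-α-q)^3) * hA)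
      rw [Prod.mk.injEq, Prod.mk.injEq] at ht1 ht2
      have ht1ne : t1 ≠ 0 := by
        intro h; rw [h, zero_mul] at ht1; exact one_ne_zero ht1.1
      have hw2 : w2 = 0 := by
        rcases mul_eq_zero.mp ht1.2.1.symm with h | h
        · exact absurd h ht1ne
        · exact h
      have hz : (-4*α*(1-α) : ℂ) = 0 := by rw [ht2.2.1, hw2, mul_zero]
      exact hαβ (by linear_combination (-1/4) * hz)
    · have hAne : (α-p)^2 ≠ 0 := pow_ne_zero 2 hA
      obtain ⟨s, hs⟩ : ∃ s : ℂ, s^2 =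
          (2*(α-p)*(1-α-q) - 4*α*(1-α))^2 - 4*(α-p)^2*(1-α-q)^2 :=
        IsAlgClosed.exists_pow_nat_eq _ zero_lt_two
      have hsne : s ≠ 0 := by
        intro h
        rw [h] at hs
        exact mul_ne_zero (mul_ne_zero (by norm_num : (-16:ℂ) ≠ 0) hαβ) hE
          (by linear_combination -hs)
      obtain ⟨t1, ht1⟩ := huniq
        (-(2*(α-p)*(1-α-q) - 4*α*(1-α)) + s, 2*(α-p)^2,
          -(p*(-(2*(α-p)*(1-α-q) - 4*α*(1-α)) + s) + q*(2*(α-p)^2)))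
        (by simp only; ring)
        (by rw [conic_restrict]; linear_combination (α-p)^2 * hs)
      obtain ⟨t2, ht2⟩ := huniq
        (-(2*(α-p)*(1-α-q) - 4*α*(1-α)) - s, 2*(α-p)^2,
          -(p*(-(2*(α-p)*(1-α-q) - 4*α*(1-α)) - s) + q*(2*(α-p)^2)))
        (by simp only; ring)
        (by rw [conic_restrict]; linear_combination (α-p)^2 * hs)
      rw [Prod.mk.injEq, Prod.mk.injEq] at ht1 ht2
      have hw2 : w2 ≠ 0 := by
        intro h
        rw [h, mul_zero] at ht1
        exact hAne (by linear_combination ht1.2.1 / 2)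
      have ht12 : t1 = t2 :=
        mul_right_cancel₀ hw2 (ht1.2.1.symm.trans ht2.2.1)
      exact hsne (by linear_combination (ht1.1 - ht2.1) / 2 + (w1/2) * ht12)
  · intro hE
    have hprod : (α - p) * (1 - α - q) = α * (1 - α) := by linear_combination hE
    have hA : α - p ≠ 0 := fun h => hαβ (by rw [← hprod, h, zero_mul])
    have hB : 1 - α - q ≠ 0 := fun h => hαβ (by rw [← hprod, h, mul_zero])
    refine ⟨(1-α-q, α-p, -(p*(1-α-q) + q*(α-p))), ?_, by simp only; ring, ?_, ?_⟩
    · intro h; rw [Prod.mk.injEq, Prod.mk.injEq] at h; exact hB h.1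
    · rw [conic_restrict]
      linear_combination (4*(α-p)*(1-α-q)) * hprod
    · rintro ⟨v1, v2, v3⟩ hl hc
      simp only at hl
      have hv3 : v3 = -(p*v1 + q*v2) := by linear_combination hl
      subst hv3
      rw [conic_restrict] at hc
      have h2 : (α-p) * v1 - (1-α-q) * v2 = 0 :=
        sqz (by linear_combination hc - 4*v1*v2*hprod)
      refine ⟨v1 / (1-α-q), ?_⟩
      rw [Prod.mk.injEq, Prod.mk.injEq]
      refine ⟨(div_mul_cancel₀ v1 hB).symm, ?_, ?_⟩
      · rw [div_mul_eq_mul_div, eq_div_iff hB]; linear_combination -h2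
      · rw [div_mul_eq_mul_div, eq_div_iff hB]; linear_combination q * h2

/-- The six lines ℓ₁ = z₁, ℓ₂ = z₂, ℓ₃ = z₃, ℓ₄ = z₁+z₂+z₃,
ℓ₅ = az₁+bz₂+z₃, ℓ₆ = cz₁+dz₂+z₃ are all tangent to the smooth conic
(αz₁ + (1−α)z₂ + z₃)² − 4α(1−α)z₁z₂ = 0 with α = a(1−b)/(a−b) if and only if
abc − abd − acd + bcd + ad − bc = 0. -/
theorem nikulin_stmt_15 (a b c d : ℂ) (hab : a ≠ b)
    (hα0 : a * (1 - b) / (a - b) ≠ 0) (hα1 : a * (1 - b) / (a - b) ≠ 1) :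
    (TangentLine (a * (1 - b) / (a - b)) (1, 0, 0) ∧
     TangentLine (a * (1 - b) / (a - b)) (0, 1, 0) ∧
     TangentLine (a * (1 - b) / (a - b)) (0, 0, 1) ∧
     TangentLine (a * (1 - b) / (a - b)) (1, 1, 1) ∧
     TangentLine (a * (1 - b) / (a - b)) (a, b, 1) ∧
     TangentLine (a * (1 - b) / (a - b)) (c, d, 1)) ↔
    a * b * c - a * b * d - a * c * d + b * c * d + a * d - b * c = 0 := by
  set α := a * (1 - b) / (a - b) with hαdef
  have hab' : a - b ≠ 0 := sub_ne_zero.mpr hab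
  have hα : α * (a - b) = a * (1 - b) := div_mul_cancel₀ _ hab'
  clear_value α
  constructor
  · rintro ⟨-, -, -, -, -, h6⟩
    have hc6 := (tangent_gen α c d hα0 hα1).mp h6
    linear_combination (-(a-b)) * hc6 + (c - d) * hα
  · intro hE
    refine ⟨tangent_l1 α, tangent_l2 α, tangent_l3 α hα1,
      (tangent_gen α 1 1 hα0 hα1).mpr (by ring),
      (tangent_gen α a b hα0 hα1).mpr (by linear_combination hα),
      (tangent_gen α c d hα0 hα1).mpr ?_⟩
    have h6 : (c*d - (1-α)*c - α*d) * (a-b) = 0 := by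
      linear_combination (c - d) * hα - hE
    rcases mul_eq_zero.mp h6 with h | h
    · exact h
    · exact absurd h hab'
end
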